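/- Let n ≥ 3 be an integer, m = (n−2)/(n+2), 0 < β < 1/2, and γ = (2β−1)/(1−m) (so γ < 0; expander case ρ = −1). If u is a positive smooth radially symmetric solution of ((n−1)/m)·Δ(u^m) + β·(x·∇u) + γ·u = 0 on ℝⁿ, then for every x ∈ ℝⁿ with |x| ≥ 1 one has u(x) ≤ M·|x|^{−γ/β}, where M is the (common) value of u on the unit sphere {|y| = 1}. -/

import Mathlib

open Real MeasureTheory Metric
open scoped Topology RealInnerProductSpace

noncomputable section

/-- Euclidean space ℝⁿ. -/
abbrev Euc (n : ℕ) := EuclideanSpace ℝ (Fin n)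

/-- Euclidean Laplacian: sum of pure second derivatives in the coordinate directions. -/
def lap {n : ℕ} (f : Euc n → ℝ) (x : Euc n) : ℝ :=
  ∑ i : Fin n, fderiv ℝ (fun y => fderiv ℝ f y (EuclideanSpace.single i 1)) x
    (EuclideanSpace.single i 1)

/-- The conformally flat Yamabe soliton equation
`((n-1)/m)·Δ(u^m) + β·(x·∇u) + γ·u = 0` on ℝⁿ. -/
def YamabePDE {n : ℕ} (m β γ : ℝ) (u : Euc n → ℝ) : Prop :=
  ∀ x : Euc n, ((n : ℝ) - 1) / m * lap (fun y => u y ^ m) x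
      + β * ⟪x, gradient u x⟫ + γ * u x = 0

/-- A function on ℝⁿ is radially symmetric if it depends only on the norm. -/
def IsRadial {n : ℕ} (u : Euc n → ℝ) : Prop :=
  ∀ x y : Euc n, ‖x‖ = ‖y‖ → u x = u y

/-- Scalar curvature of the conformally flat metric g = u^{4/(n+2)}·dx²:
`R = -(4(n-1)/(n-2))·u⁻¹·Δ(u^m)`. -/
def scalarCurv {n : ℕ} (m : ℝ) (u : Euc n → ℝ) (x : Euc n) : ℝ :=
  -(4 * ((n : ℝ) - 1) / ((n : ℝ) - 2)) * lap (fun y => u y ^ m) x / u x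

/-!
Write `u x = U ‖x‖`. The equation becomes an ODE for the profile `U`, and the claim says that
`U r * r ^ (-c)` is nonincreasing on `[1, ∞)`, where `c = -γ/β > 0`; that is,
`φ r = r U' r - c U r ≤ 0`. Now `φ 0 = -c U 0 < 0`, and wherever `φ` vanishes the drift term
`β r U' + γ U` vanishes, hence so does the radial Laplacian of `U ^ m`, which gives
`r U φ' = c U² (2 - n - m c) < 0`. So `φ` can never cross zero from below.
-/

open Set

theorem IsRadial.comp {n : ℕ} {u : Euc n → ℝ} (hu : IsRadial u) (g : ℝ → ℝ) :
    IsRadial (fun y => g (u y)) :=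
  fun x y h => congrArg g (hu x y h)

theorem IsRadial.eq_norm_smul {n : ℕ} {u : Euc n → ℝ} (hu : IsRadial u) {e : Euc n}
    (he : ‖e‖ = 1) (x : Euc n) : u x = u (‖x‖ • e) :=
  hu _ _ (by simp [norm_smul, he])

theorem inner_smul_gradient {E : Type*} [NormedAddCommGroup E] [InnerProductSpace ℝ E]
    [CompleteSpace E] {u : E → ℝ} (e : E) {r : ℝ} (hu : DifferentiableAt ℝ u (r • e)) :
    ⟪r • e, gradient u (r • e)⟫ = r * deriv (fun s => u (s • e)) r := by
  have hline : HasDerivAt (fun s : ℝ => s • e) e r := by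
    simpa using (hasDerivAt_id r).smul_const e
  have hcomp : HasDerivAt (fun s => u (s • e)) (fderiv ℝ u (r • e) e) r :=
    hu.hasFDerivAt.comp_hasDerivAt r hline
  rw [hcomp.deriv, ← toDual_gradient,
    InnerProductSpace.toDual_apply_apply, real_inner_smul_left, real_inner_comm]

theorem fderiv_fderiv_apply_eq_deriv_deriv {E F : Type*} [NormedAddCommGroup E]
    [NormedSpace ℝ E] [NormedAddCommGroup F] [NormedSpace ℝ F] {f : E → F}
    (hf : ContDiff ℝ 2 f) (x v : E) :
    fderiv ℝ (fun y => fderiv ℝ f y v) x v = deriv (deriv fun t : ℝ => f (x + t • v)) 0 := by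
  have hline : ∀ t : ℝ, HasDerivAt (fun s : ℝ => x + s • v) v t := fun t => by
    simpa using ((hasDerivAt_id t).smul_const v).const_add x
  have hderiv : deriv (fun t : ℝ => f (x + t • v)) = fun t => fderiv ℝ f (x + t • v) v :=
    funext fun t =>
      ((hf.differentiable two_ne_zero _).hasFDerivAt.comp_hasDerivAt t (hline t)).deriv
  have hd : Differentiable ℝ fun y => fderiv ℝ f y v :=
    ((hf.fderiv_right (m := 1) le_rfl).clm_apply contDiff_const).differentiable one_ne_zero
  have hcomp : HasDerivAt (fun t : ℝ => fderiv ℝ f (x + t • v) v)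
      (fderiv ℝ (fun y => fderiv ℝ f y v) (x + (0 : ℝ) • v) v) 0 :=
    (hd _).hasFDerivAt.comp_hasDerivAt 0 (hline 0)
  rw [hderiv, hcomp.deriv, zero_smul, add_zero]

theorem norm_smul_single_add_smul_single {n : ℕ} {i j : Fin n} (hij : i ≠ j) (r t : ℝ) :
    ‖r • EuclideanSpace.single i (1 : ℝ) + t • EuclideanSpace.single j 1‖ = √(r ^ 2 + t ^ 2) := by
  rw [← sqrt_sq (norm_nonneg _), norm_add_sq_real, real_inner_smul_left,
    real_inner_smul_right, EuclideanSpace.inner_single_left]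
  simp [norm_smul, hij.symm]

theorem deriv_deriv_comp_sqrt_sq_add_sq {F : ℝ → ℝ} (hF : ContDiff ℝ 2 F) {r : ℝ} (hr : 0 < r) :
    deriv (deriv fun t => F √(r ^ 2 + t ^ 2)) 0 = deriv F r / r := by
  set ρ : ℝ → ℝ := fun t => √(r ^ 2 + t ^ 2)
  have hρpos : ∀ t, 0 < ρ t := fun t => sqrt_pos.2 (by positivity)
  have hρ : ∀ t, HasDerivAt ρ (t / ρ t) t := fun t => by
    convert ((hasDerivAt_pow 2 t).const_add (r ^ 2)).sqrt (by positivity) using 1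
    simp only [ρ]
    field_simp
    ring
  -- `(F ∘ ρ)' t = t · H t` with `H` differentiable, so `(F ∘ ρ)'' 0 = H 0`.
  have hderiv : deriv (fun t => F (ρ t)) = fun t => t * (deriv F (ρ t) / ρ t) :=
    funext fun t => by
      have hcomp : HasDerivAt (fun t => F (ρ t)) (deriv F (ρ t) * (t / ρ t)) t :=
        (hF.differentiable two_ne_zero _).hasDerivAt.comp t (hρ t)
      rw [hcomp.deriv]
      ring
  have hH : HasDerivAt (fun t => t * (deriv F (ρ t) / ρ t)) (1 * (deriv F (ρ 0) / ρ 0) + 0 *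
      ((deriv (deriv F) (ρ 0) * (0 / ρ 0) * ρ 0 - deriv F (ρ 0) * (0 / ρ 0)) / ρ 0 ^ 2)) 0 :=
    (hasDerivAt_id 0).mul <|
      ((hF.differentiable_deriv_two _).hasDerivAt.comp 0 (hρ 0)).div (hρ 0) (hρpos 0).ne'
  rw [hderiv, hH.deriv]
  simp [ρ, sqrt_sq hr.le]

def radialLap (d : ℝ) (F : ℝ → ℝ) (r : ℝ) : ℝ :=
  deriv (deriv F) r + (d - 1) / r * deriv F r

theorem lap_smul_single {n : ℕ} {f : Euc n → ℝ} (hf : ContDiff ℝ 2 f) (hrad : IsRadial f)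
    (i : Fin n) {r : ℝ} (hr : 0 < r) :
    lap f (r • EuclideanSpace.single i 1)
      = radialLap n (fun s => f (s • EuclideanSpace.single i 1)) r := by
  set e : Euc n := EuclideanSpace.single i 1
  set F : ℝ → ℝ := fun s => f (s • e)
  have hF : ContDiff ℝ 2 F := hf.comp (contDiff_id.smul contDiff_const)
  have hdiag : deriv (deriv fun t : ℝ => f (r • e + t • e)) 0 = deriv (deriv F) r := by
    have hfun : (fun t : ℝ => f (r • e + t • e)) = fun t => F (r + t) :=
      funext fun t => by rw [← add_smul]
    rw [hfun, funext fun t => deriv_comp_const_add F r t, deriv_comp_const_add, add_zero]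
  have hoff : ∀ j, j ≠ i →
      deriv (deriv fun t : ℝ => f (r • e + t • EuclideanSpace.single j 1)) 0 = deriv F r / r := by
    intro j hj
    have hfun : (fun t : ℝ => f (r • e + t • EuclideanSpace.single j 1))
        = fun t => F √(r ^ 2 + t ^ 2) := funext fun t => by
      rw [hrad.eq_norm_smul (e := e) (by simp [e]) (r • e + _),
        norm_smul_single_add_smul_single hj.symm]
    rw [hfun, deriv_deriv_comp_sqrt_sq_add_sq hF hr]
  rw [lap, radialLap, Finset.sum_congr rfl fun j _ => fderiv_fderiv_apply_eq_deriv_deriv hf _ _,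
    ← Finset.add_sum_erase _ _ (Finset.mem_univ i), hdiag,
    Finset.sum_congr rfl fun j hj => hoff j (Finset.ne_of_mem_erase hj), Finset.sum_const,
    Finset.card_erase_of_mem (Finset.mem_univ i), Finset.card_univ, Fintype.card_fin,
    nsmul_eq_mul, Nat.cast_sub i.pos]
  push_cast
  ring

theorem radialLap_rpow {U : ℝ → ℝ} (hU : ContDiff ℝ 2 U) (hUpos : ∀ s, 0 < U s)
    (d m r : ℝ) :
    radialLap d (fun s => U s ^ m) r = m * U r ^ (m - 2) *
      ((m - 1) * deriv U r ^ 2 + U r * deriv (deriv U) r + (d - 1) / r * U r * deriv U r) := by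
  have hUd : Differentiable ℝ U := hU.differentiable two_ne_zero
  have hV' : deriv (fun s => U s ^ m) = fun s => deriv U s * m * U s ^ (m - 1) :=
    funext fun s => ((hUd s).hasDerivAt.rpow_const (Or.inl (hUpos s).ne')).deriv
  have hV'' : HasDerivAt (fun s => deriv U s * m * U s ^ (m - 1))
      (deriv (deriv U) r * m * U r ^ (m - 1)
        + deriv U r * m * (deriv U r * (m - 1) * U r ^ (m - 1 - 1))) r :=
    (hU.differentiable_deriv_two r).hasDerivAt.mul_const m |>.mul
      ((hUd r).hasDerivAt.rpow_const (Or.inl (hUpos r).ne'))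
  have hpow : U r ^ (m - 1) = U r ^ (m - 2) * U r := by
    rw [← rpow_add_one (hUpos r).ne']; ring_nf
  rw [radialLap, hV', hV''.deriv]
  beta_reduce
  rw [hpow, show m - 1 - 1 = m - 2 by ring]
  ring

theorem euler_deriv_neg {U : ℝ → ℝ} {d m c x : ℝ} (hd : 2 ≤ d) (hm : 0 < m) (hc : 0 < c)
    (hU : ContDiff ℝ 2 U) (hUpos : ∀ s, 0 < U s) (hx : 0 < x)
    (hlap : radialLap d (fun s => U s ^ m) x = 0) (heuler : x * deriv U x = c * U x) :
    (1 - c) * deriv U x + x * deriv (deriv U) x < 0 := by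
  rw [radialLap_rpow hU hUpos] at hlap
  have hode : (m - 1) * deriv U x ^ 2 + U x * deriv (deriv U) x
      + (d - 1) / x * U x * deriv U x = 0 :=
    (mul_eq_zero.mp hlap).resolve_left (by have := hUpos x; positivity)
  have hode' : (m - 1) * (x * deriv U x) ^ 2 + x ^ 2 * U x * deriv (deriv U) x
      + (d - 1) * U x * (x * deriv U x) = 0 := by
    field_simp at hode; linear_combination x * hode
  have key : ((1 - c) * deriv U x + x * deriv (deriv U) x) * (x * U x)
      = c * U x ^ 2 * (2 - d - m * c) := by
    linear_combination hode' + (-(m - 1) * (x * deriv U x + c * U x) + (2 - c - d) * U x) * heuler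
  have hneg : c * U x ^ 2 * (2 - d - m * c) < 0 :=
    mul_neg_of_pos_of_neg (by have := hUpos x; positivity) (by nlinarith)
  exact neg_of_mul_neg_left (key ▸ hneg) (by have := hUpos x; positivity)

theorem mul_deriv_le_of_radialLap_eq_zero {U : ℝ → ℝ} {d m c : ℝ} (hd : 2 ≤ d) (hm : 0 < m)
    (hc : 0 < c) (hU : ContDiff ℝ 2 U) (hUpos : ∀ s, 0 < U s)
    (hlap : ∀ r, 0 < r → r * deriv U r = c * U r → radialLap d (fun s => U s ^ m) r = 0)
    {s : ℝ} (hs : 0 ≤ s) : s * deriv U s ≤ c * U s := by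
  set φ : ℝ → ℝ := fun x => x * deriv U x - c * U x
  have hφ : ∀ x, HasDerivAt φ ((1 - c) * deriv U x + x * deriv (deriv U) x) x := fun x =>
    ((hasDerivAt_id x).mul (hU.differentiable_deriv_two x).hasDerivAt |>.sub
      ((hU.differentiable two_ne_zero x).hasDerivAt.const_mul c)).congr_deriv
        (by simp only [one_mul, id_eq]; ring)
  have hφ0 : φ 0 < 0 := by simpa [φ] using mul_pos hc (hUpos 0)
  suffices φ s ≤ 0 by simpa [φ] using this
  refine image_le_of_deriv_right_lt_deriv_boundary (a := 0) (B := fun _ => 0) (B' := fun _ => 0)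
    (fun x _ => (hφ x).continuousAt.continuousWithinAt) (fun x _ => (hφ x).hasDerivWithinAt)
    hφ0.le (fun _ => hasDerivAt_const _ _) (fun x hx hφx => ?_) ⟨hs, le_rfl⟩
  have hx : 0 < x := hx.1.lt_of_ne (by rintro rfl; exact hφ0.ne hφx)
  have heuler : x * deriv U x = c * U x := sub_eq_zero.mp hφx
  exact euler_deriv_neg hd hm hc hU hUpos hx (hlap x hx heuler) heuler

theorem le_mul_rpow_of_mul_deriv_le {U : ℝ → ℝ} {c : ℝ} (hU : Differentiable ℝ U)
    (h : ∀ s, 1 ≤ s → s * deriv U s ≤ c * U s) {r : ℝ} (hr : 1 ≤ r) :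
    U r ≤ U 1 * r ^ c := by
  have hG : AntitoneOn (fun s => U s * s ^ (-c)) (Ici 1) := by
    refine antitoneOn_of_hasDerivWithinAt_nonpos (convex_Ici 1)
      (f' := fun s => s ^ (-c - 1) * (s * deriv U s - c * U s)) (fun s hs => ?_)
      (fun s hs => ?_) (fun s hs => ?_)
    · exact ((hU s).continuousAt.mul
        (continuousAt_rpow_const _ _ (Or.inl (by linarith [hs.out])))).continuousWithinAt
    · have hs0 : s ≠ 0 := by rw [interior_Ici] at hs; linarith [hs.out]
      refine (((hU s).hasDerivAt.mul (hasDerivAt_rpow_const (Or.inl hs0))).congr_deriv ?_)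
        |>.hasDerivWithinAt
      rw [rpow_sub_one hs0]
      field_simp
      ring
    · rw [interior_Ici] at hs
      exact mul_nonpos_of_nonneg_of_nonpos (rpow_nonneg (by linarith [hs.out]) _)
        (sub_nonpos.2 (h s (le_of_lt hs)))
  have hGr : U r * r ^ (-c) ≤ U 1 := by simpa using hG (mem_Ici.2 le_rfl) hr hr
  calc U r = U r * r ^ (-c) * r ^ c := by
        rw [mul_assoc, ← rpow_add (by linarith), neg_add_cancel, rpow_zero, mul_one]
    _ ≤ U 1 * r ^ c := mul_le_mul_of_nonneg_right hGr (rpow_nonneg (by linarith) _)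

theorem le_mul_rpow_of_yamabe_ode {U : ℝ → ℝ} {d m β γ : ℝ} (hd : 2 ≤ d) (hm : 0 < m)
    (hβ : 0 < β) (hγ : γ < 0) (hU : ContDiff ℝ 2 U) (hUpos : ∀ s, 0 < U s)
    (hode : ∀ r, 0 < r →
      (d - 1) / m * radialLap d (fun s => U s ^ m) r + β * (r * deriv U r) + γ * U r = 0)
    {r : ℝ} (hr : 1 ≤ r) : U r ≤ U 1 * r ^ (-(γ / β)) := by
  have hc : 0 < -(γ / β) := neg_pos.2 (div_neg_of_neg_of_pos hγ hβ)
  refine le_mul_rpow_of_mul_deriv_le (hU.differentiable two_ne_zero) (fun s hs => ?_) hr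
  refine mul_deriv_le_of_radialLap_eq_zero hd hm hc hU hUpos (fun x hx heuler => ?_) (by linarith)
  have hdrift : β * (x * deriv U x) + γ * U x = 0 := by
    rw [heuler]; field_simp; ring
  have hcoef : (d - 1) / m ≠ 0 := div_ne_zero (by linarith) hm.ne'
  exact (mul_eq_zero.mp (by linarith [hode x hx])).resolve_left hcoef

/-- upper bound for Yamabe expanders with γ < 0. -/
theorem expander_upper_bound (n : ℕ) (hn : 3 ≤ n)
    (m β γ : ℝ)
    (hm : m = ((n : ℝ) - 2) / ((n : ℝ) + 2))
    (hβ : 0 < β) (hβ' : β < 1 / 2)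
    (hγ : γ = (2 * β - 1) / (1 - m))
    (u : Euc n → ℝ)
    (hpos : ∀ x, 0 < u x) (hsmooth : ContDiff ℝ (⊤ : ℕ∞) u)
    (hrad : IsRadial u) (hpde : YamabePDE m β γ u)
    (M : ℝ) (hM : ∀ x : Euc n, ‖x‖ = 1 → u x = M) :
    ∀ x : Euc n, 1 ≤ ‖x‖ → u x ≤ M * ‖x‖ ^ (-(γ / β)) := by
  have hn' : (3 : ℝ) ≤ n := by exact_mod_cast hn
  have hm0 : 0 < m := by rw [hm]; exact div_pos (by linarith) (by linarith)
  have hγ0 : γ < 0 := by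
    have hm1 : m < 1 := by rw [hm, div_lt_one (by linarith)]; linarith
    rw [hγ]; exact div_neg_of_neg_of_pos (by linarith) (by linarith)
  have hu : ContDiff ℝ 2 u := hsmooth.of_le (WithTop.coe_le_coe.mpr le_top)
  obtain ⟨i⟩ : Nonempty (Fin n) := ⟨⟨0, by omega⟩⟩
  have hlap := fun r (hr : 0 < r) =>
    lap_smul_single (hu.rpow_const_of_ne fun y => (hpos y).ne') (hrad.comp (· ^ m)) i hr
  set e : Euc n := EuclideanSpace.single i 1
  have he : ‖e‖ = 1 := by simp [e]
  have hode : ∀ r, 0 < r → ((n : ℝ) - 1) / m * radialLap n (fun s => u (s • e) ^ m) r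
      + β * (r * deriv (fun s => u (s • e)) r) + γ * u (r • e) = 0 := fun r hr => by
    simpa only [hlap r hr, inner_smul_gradient e (hu.differentiable two_ne_zero _)]
      using hpde (r • e)
  intro x hx
  have h := le_mul_rpow_of_yamabe_ode (U := fun s => u (s • e)) (by linarith) hm0 hβ hγ0
    (hu.comp (contDiff_id.smul contDiff_const)) (fun s => hpos _) hode hx
  rwa [one_smul, hM e he, ← hrad.eq_norm_smul he] at h
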